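/- arXiv:1501.03208 — 2 statements merged into one kernel-verified Lean document; each statement's English description precedes it below -/
import Mathlib

section
/- For the harmonic frame D ∈ ℂ^{n×N} with N = n+L, whose entries are d_{jk} = (n+L)^{-1/2} exp(2πi jk/(n+L)) for j ∈ [n], k ∈ [N], the Gram matrix satisfies (D*D)_{kk} = n/(n+L) for all k, and |(D*D)_{jk}| ≤ L/(n+L) for all j ≠ k. -/
open Finset Matrix

/-- The harmonic frame: the `n × (n+L)` matrix obtained by deleting the last `L`
rows of the `(n+L) × (n+L)` DFT matrix. -/
noncomputable def harmonicFrame (n L : ℕ) : Matrix (Fin n) (Fin (n + L)) ℂ :=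
  fun j k => (1 / (Real.sqrt (n + L) : ℝ)) *
    Complex.exp (2 * Real.pi * Complex.I * ((j : ℕ) : ℂ) * ((k : ℕ) : ℂ) / ((n + L : ℕ) : ℂ))

/-!
With `ζ = exp (2πi / N)`, the entry `(D*D)_{jk}` is `N⁻¹ ∑_{m<n} ωᵐ` for `ω = ζᵏ / ζʲ`.
On the diagonal `ω = 1`. Off the diagonal `ω ≠ 1` is an `N`-th root of unity, so the geometric
sum over all `m < N` vanishes and the sum over `m < n` is minus the sum of the `L` remaining
terms, each of modulus one.
-/

theorem norm_geom_sum_le_of_pow_eq_one {𝕜 : Type*} [NormedField 𝕜] {ω : 𝕜} {n L : ℕ}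
    (hω : ω ^ (n + L) = 1) (hω1 : ω ≠ 1) : ‖∑ m ∈ range n, ω ^ m‖ ≤ L := by
  rcases n.eq_zero_or_pos with rfl | hn
  · simp
  have hnorm : ‖ω‖ = 1 :=
    (pow_eq_one_iff_of_nonneg (norm_nonneg ω) (by omega : n + L ≠ 0)).1
      (by rw [← norm_pow, hω, norm_one])
  have hfull : ∑ m ∈ range (n + L), ω ^ m = 0 := by
    rw [geom_sum_eq hω1, hω, sub_self, zero_div]
  have htail : ∑ m ∈ range n, ω ^ m = -∑ i ∈ range L, ω ^ (n + i) :=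
    eq_neg_of_add_eq_zero_left ((sum_range_add _ n L).symm.trans hfull)
  calc ‖∑ m ∈ range n, ω ^ m‖ ≤ ∑ i ∈ range L, ‖ω ^ (n + i)‖ := by
        rw [htail, norm_neg]; exact norm_sum_le _ _
    _ = L := by simp [hnorm]

theorem conjTranspose_mul_self_apply_of_pow {n : ℕ} {ι : Type*} {c : ℝ} {z : ι → ℂ}
    (hz : ∀ k, ‖z k‖ = 1) (D : Matrix (Fin n) ι ℂ) (hD : ∀ m k, D m k = c * z k ^ (m : ℕ))
    (j k : ι) : (Dᴴ * D) j k = (c ^ 2 : ℝ) * ∑ m ∈ range n, (z k / z j) ^ m := by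
  rw [mul_apply, ← Fin.sum_univ_eq_sum_range, mul_sum]
  refine sum_congr rfl fun m _ => ?_
  rw [conjTranspose_apply, hD, hD, star_mul', RCLike.star_def, Complex.conj_ofReal, map_pow,
    ← Complex.inv_eq_conj (hz j), div_eq_mul_inv, mul_pow, inv_pow]
  push_cast
  ring

noncomputable def dftRoot (N : ℕ) : ℂ := Complex.exp (2 * Real.pi * Complex.I / N)

theorem isPrimitiveRoot_dftRoot {N : ℕ} (hN : N ≠ 0) : IsPrimitiveRoot (dftRoot N) N :=
  Complex.isPrimitiveRoot_exp N hN

theorem harmonicFrame_apply (n L : ℕ) (j : Fin n) (k : Fin (n + L)) :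
    harmonicFrame n L j k =
      (1 / Real.sqrt (n + L) : ℝ) * (dftRoot (n + L) ^ (k : ℕ)) ^ (j : ℕ) := by
  rw [harmonicFrame, dftRoot, ← pow_mul, ← Complex.exp_nat_mul]
  push_cast
  ring_nf

theorem harmonicFrame_gram_apply (n L : ℕ) (j k : Fin (n + L)) :
    ((harmonicFrame n L)ᴴ * harmonicFrame n L) j k =
      ((n + L : ℕ) : ℂ)⁻¹ *
        ∑ m ∈ range n, (dftRoot (n + L) ^ (k : ℕ) / dftRoot (n + L) ^ (j : ℕ)) ^ m := by
  have hζ := (isPrimitiveRoot_dftRoot k.pos.ne').norm'_eq_one k.pos.ne'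
  rw [conjTranspose_mul_self_apply_of_pow (fun i => by rw [norm_pow, hζ, one_pow]) _
    (harmonicFrame_apply n L)]
  congr 1
  rw [one_div, inv_pow, Real.sq_sqrt (by positivity)]
  push_cast
  rfl

theorem harmonicFrame_gram_entries_general (n L : ℕ) :
    (∀ k, ((harmonicFrame n L).conjTranspose * harmonicFrame n L) k k
        = ((n : ℂ) / ((n : ℂ) + (L : ℂ)))) ∧
    (∀ j k : Fin (n + L), j ≠ k →
      ‖((harmonicFrame n L).conjTranspose * harmonicFrame n L) j k‖
        ≤ (L : ℝ) / ((n : ℝ) + (L : ℝ))) := by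
  refine ⟨fun k => ?_, fun j k hjk => ?_⟩
  · have hζ := (isPrimitiveRoot_dftRoot k.pos.ne').ne_zero k.pos.ne'
    rw [harmonicFrame_gram_apply, div_self (pow_ne_zero _ hζ)]
    simp only [one_pow, sum_const, card_range, nsmul_eq_mul, mul_one]
    push_cast
    ring
  · have hζ := isPrimitiveRoot_dftRoot k.pos.ne'
    set ω := dftRoot (n + L) ^ (k : ℕ) / dftRoot (n + L) ^ (j : ℕ)
    have hω : ω ^ (n + L) = 1 := by
      simp only [ω, div_pow, pow_right_comm _ _ (n + L), hζ.pow_eq_one, one_pow, div_one]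
    have hω1 : ω ≠ 1 := fun h => hjk (Fin.ext (hζ.pow_inj j.2 k.2
      ((div_eq_one_iff_eq (pow_ne_zero _ (hζ.ne_zero k.pos.ne'))).1 h).symm))
    rw [harmonicFrame_gram_apply, norm_mul, norm_inv, Complex.norm_natCast]
    calc (((n + L : ℕ) : ℝ))⁻¹ * ‖∑ m ∈ range n, ω ^ m‖ ≤ ((n + L : ℕ) : ℝ)⁻¹ * L := by
          gcongr; exact norm_geom_sum_le_of_pow_eq_one hω hω1
      _ = L / (n + L) := by push_cast; ring

/-- The Gram matrix of the harmonic frame has diagonal entries `n/(n+L)` and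
off-diagonal entries of modulus at most `L/(n+L)`. -/
theorem harmonicFrame_gram_entries (n L : ℕ) (hn : 0 < n) :
    (∀ k, ((harmonicFrame n L).conjTranspose * harmonicFrame n L) k k
        = ((n : ℂ) / ((n : ℂ) + (L : ℂ)))) ∧
    (∀ j k : Fin (n + L), j ≠ k →
      ‖((harmonicFrame n L).conjTranspose * harmonicFrame n L) j k‖
        ≤ (L : ℝ) / ((n : ℝ) + (L : ℝ))) :=
  harmonicFrame_gram_entries_general n L
end

section
/- For every a > 0, ∫₀^a √(log(1 + 1/t)) dt ≤ a·√(log(e(1 + 1/a))). -/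
/-!
By Jensen's inequality for the concave square root (equivalently Cauchy–Schwarz),
`∫₀^a √L ≤ √(a ∫₀^a L)` for `L t = log (1 + 1/t)`. The function `L` has the explicit primitive
`(1 + t) log (1 + t) - t log t`, so `∫₀^a L = a log (1 + 1/a) + log (1 + a)`, and
`log (1 + a) ≤ a` turns this into `a log (e (1 + 1/a))`.
-/

open MeasureTheory Set Real

section Sqrt

variable {α : Type*} [MeasurableSpace α] {μ : Measure α} {s : Set α} {f : α → ℝ}

theorem MeasureTheory.IntegrableOn.sqrt (hs : μ s ≠ ⊤) (hf : IntegrableOn f s μ) :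
    IntegrableOn (fun x ↦ √(f x)) s μ := by
  refine Integrable.mono' ((integrableOn_const (C := (1 : ℝ)) hs).add hf.abs)
    (continuous_sqrt.comp_aestronglyMeasurable hf.aestronglyMeasurable) (ae_of_all _ fun x ↦ ?_)
  rw [norm_of_nonneg (sqrt_nonneg _)]
  show √(f x) ≤ 1 + |f x|
  exact (sqrt_le_left (by positivity)).2 (by nlinarith [abs_nonneg (f x), le_abs_self (f x)])

theorem setIntegral_sqrt_le (hs : μ s ≠ ⊤) (hf : IntegrableOn f s μ)
    (hf₀ : ∀ᵐ x ∂μ.restrict s, 0 ≤ f x) :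
    ∫ x in s, √(f x) ∂μ ≤ √(μ.real s * ∫ x in s, f x ∂μ) := by
  rcases eq_or_ne (μ s) 0 with h0 | h0
  · rw [setIntegral_measure_zero _ h0]
    exact sqrt_nonneg _
  have hm : 0 < μ.real s := ENNReal.toReal_pos h0 hs
  have jensen : ⨍ x in s, √(f x) ∂μ ≤ √(⨍ x in s, f x ∂μ) :=
    strictConcaveOn_sqrt.concaveOn.le_map_set_average continuous_sqrt.continuousOn isClosed_Ici
      h0 hs hf₀ hf (hf.sqrt hs)
  rw [setAverage_eq, setAverage_eq, smul_eq_mul, smul_eq_mul, inv_mul_le_iff₀ hm] at jensen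
  calc ∫ x in s, √(f x) ∂μ ≤ μ.real s * √((μ.real s)⁻¹ * ∫ x in s, f x ∂μ) := jensen
    _ = √(μ.real s ^ 2) * √((μ.real s)⁻¹ * ∫ x in s, f x ∂μ) := by rw [sqrt_sq hm.le]
    _ = √(μ.real s * ∫ x in s, f x ∂μ) := by
      rw [← sqrt_mul (sq_nonneg _)]
      congr 1
      field_simp

end Sqrt

lemma hasDerivAt_one_add_mul_log_one_add_sub_mul_log {x : ℝ} (hx : 0 < x) :
    HasDerivAt (fun t ↦ (1 + t) * log (1 + t) - t * log t) (log (1 + 1 / x)) x := by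
  have hx1 : 0 < 1 + x := by linarith
  have h := (((hasDerivAt_mul_log hx1.ne').comp x ((hasDerivAt_id x).const_add 1)).sub
    (hasDerivAt_mul_log hx.ne'))
  refine h.congr_deriv ?_
  rw [one_add_div hx.ne', add_comm x 1, log_div hx1.ne' hx.ne']
  ring

lemma continuous_one_add_mul_log_one_add_sub_mul_log :
    Continuous (fun t : ℝ ↦ (1 + t) * log (1 + t) - t * log t) :=
  (continuous_mul_log.comp (continuous_const.add continuous_id)).sub continuous_mul_log

lemma log_one_add_inv_nonneg {x : ℝ} (hx : 0 < x) : 0 ≤ log (1 + 1 / x) :=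
  log_nonneg (le_add_of_nonneg_right (by positivity))

section

variable {a : ℝ}

lemma intervalIntegrable_log_one_add_inv (ha : 0 ≤ a) :
    IntervalIntegrable (fun t ↦ log (1 + 1 / t)) volume 0 a := by
  refine intervalIntegral.intervalIntegrable_deriv_of_nonneg
    continuous_one_add_mul_log_one_add_sub_mul_log.continuousOn (fun x hx ↦ ?_) fun x hx ↦ ?_
  all_goals
    rw [min_eq_left ha] at hx
  · exact hasDerivAt_one_add_mul_log_one_add_sub_mul_log hx.1
  · exact log_one_add_inv_nonneg hx.1

lemma integral_log_one_add_inv (ha : 0 ≤ a) :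
    ∫ t in 0..a, log (1 + 1 / t) = (1 + a) * log (1 + a) - a * log a := by
  rw [intervalIntegral.integral_eq_sub_of_hasDerivAt_of_le ha
    continuous_one_add_mul_log_one_add_sub_mul_log.continuousOn
    (fun x hx ↦ hasDerivAt_one_add_mul_log_one_add_sub_mul_log hx.1)
    (intervalIntegrable_log_one_add_inv ha)]
  simp

lemma integral_log_one_add_inv_le (ha : 0 < a) :
    ∫ t in 0..a, log (1 + 1 / t) ≤ a * log (exp 1 * (1 + 1 / a)) := by
  have hlog : log (1 + a) ≤ a := by linarith [log_le_sub_one_of_pos (by linarith : 0 < 1 + a)]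
  have hsplit : (1 + a) * log (1 + a) - a * log a = a * log (1 + 1 / a) + log (1 + a) := by
    rw [one_add_div ha.ne', add_comm a 1, log_div (by linarith) ha.ne']
    ring
  rw [integral_log_one_add_inv ha.le, hsplit, log_mul (exp_ne_zero 1) (by positivity), log_exp]
  linarith

end

/-- For every `a > 0`, `∫₀^a √(log(1 + 1/t)) dt ≤ a √(log(e(1 + 1/a)))`. -/
theorem integral_sqrt_log_le (a : ℝ) (ha : 0 < a) :
    ∫ t in (0 : ℝ)..a, Real.sqrt (Real.log (1 + 1 / t))
      ≤ a * Real.sqrt (Real.log (Real.exp 1 * (1 + 1 / a))) := by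
  have hint := (intervalIntegrable_log_one_add_inv ha.le).1
  have hnonneg : ∀ᵐ t ∂volume.restrict (Ioc 0 a), 0 ≤ log (1 + 1 / t) :=
    (ae_restrict_iff' measurableSet_Ioc).2 (ae_of_all _ fun t ht ↦ log_one_add_inv_nonneg ht.1)
  calc ∫ t in (0 : ℝ)..a, √(log (1 + 1 / t))
      = ∫ t in Ioc 0 a, √(log (1 + 1 / t)) := intervalIntegral.integral_of_le ha.le
    _ ≤ √(volume.real (Ioc 0 a) * ∫ t in Ioc 0 a, log (1 + 1 / t)) :=
      setIntegral_sqrt_le measure_Ioc_lt_top.ne hint hnonneg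
    _ = √(a * ∫ t in 0..a, log (1 + 1 / t)) := by
      rw [volume_real_Ioc_of_le ha.le, sub_zero, intervalIntegral.integral_of_le ha.le]
    _ ≤ √(a * (a * log (exp 1 * (1 + 1 / a)))) := by
      gcongr
      exact integral_log_one_add_inv_le ha
    _ = a * √(log (exp 1 * (1 + 1 / a))) := by
      rw [← mul_assoc, sqrt_mul (mul_self_nonneg a), sqrt_mul_self ha.le]
end
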